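/- On M = ℝ² with the symmetries s_{(a,ℓ)}(a′,ℓ′) = (2a − a′, 2cosh(a − a′)ℓ − ℓ′), the following hold for all x, y ∈ M: (i) s_x ∘ s_x = id; (ii) s_x(x) = x; (iii) s_x ∘ s_y ∘ s_x = s_{s_x(y)}. (These are the symmetric-space axioms for the solvable symplectic symmetric surface SO(1,1) ⋉ ℝ²/ℝ in the global Darboux coordinates of Section 8.3.) -/

import Mathlib

/-- The symmetry `s_{(a,ℓ)}(a',ℓ') = (2a - a', 2cosh(a - a')ℓ - ℓ')` of the
solvable symplectic symmetric surface `SO(1,1) ⋉ ℝ² / ℝ` in global Darboux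
coordinates. -/
noncomputable def symmPoincare (x y : ℝ × ℝ) : ℝ × ℝ :=
  (2 * x.1 - y.1, 2 * Real.cosh (x.1 - y.1) * x.2 - y.2)

/-! The first coordinate of `s_x` is the point reflection `a' ↦ 2a - a'` of the line, and the
second is affine in `ℓ'` with a coefficient depending only on `a - a'`, an even function of it.
So the first two axioms are immediate, and the second coordinate of `s_x s_y s_x = s_{s_x y}`
reduces to `cosh (u + v) + cosh (u - v) = 2 cosh u cosh v` with `u = 2a - b - c`, `v = a - b`
for first coordinates `a`, `b`, `c` of `x`, `y`, `z`. -/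

theorem Real.cosh_add_add_cosh_sub (u v : ℝ) :
    Real.cosh (u + v) + Real.cosh (u - v) = 2 * Real.cosh u * Real.cosh v := by
  rw [Real.cosh_add, Real.cosh_sub]
  ring

@[simp]
theorem symmPoincare_fst (x y : ℝ × ℝ) : (symmPoincare x y).1 = 2 * x.1 - y.1 := rfl

@[simp]
theorem symmPoincare_snd (x y : ℝ × ℝ) :
    (symmPoincare x y).2 = 2 * Real.cosh (x.1 - y.1) * x.2 - y.2 := rfl

theorem symmPoincare_symmPoincare (x y : ℝ × ℝ) : symmPoincare x (symmPoincare x y) = y := by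
  refine Prod.ext (by simp) ?_
  have hcosh : Real.cosh (x.1 - (2 * x.1 - y.1)) = Real.cosh (x.1 - y.1) := by
    rw [← Real.cosh_neg]
    ring_nf
  simp only [symmPoincare_fst, symmPoincare_snd, hcosh]
  ring

theorem symmPoincare_self (x : ℝ × ℝ) : symmPoincare x x = x := by
  refine Prod.ext (by simp only [symmPoincare_fst]; ring) ?_
  simp only [symmPoincare_snd, sub_self, Real.cosh_zero]
  ring

theorem symmPoincare_conj (x y z : ℝ × ℝ) :
    symmPoincare x (symmPoincare y (symmPoincare x z)) = symmPoincare (symmPoincare x y) z := by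
  refine Prod.ext (by simp only [symmPoincare_fst]; ring) ?_
  rcases x with ⟨a, p⟩; rcases y with ⟨b, q⟩; rcases z with ⟨c, r⟩
  have hneg : Real.cosh (b - (2 * a - c)) = Real.cosh (2 * a - b - c) := by
    rw [← Real.cosh_neg]
    ring_nf
  have hsum := Real.cosh_add_add_cosh_sub (2 * a - b - c) (a - b)
  rw [show 2 * a - b - c + (a - b) = a - (2 * b - (2 * a - c)) by ring,
    show 2 * a - b - c - (a - b) = a - c by ring] at hsum
  simp only [symmPoincare_fst, symmPoincare_snd, hneg]
  linear_combination 2 * p * hsum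

theorem symmPoincare_symmetric_space_axioms :
    (∀ x y : ℝ × ℝ, symmPoincare x (symmPoincare x y) = y) ∧
    (∀ x : ℝ × ℝ, symmPoincare x x = x) ∧
    (∀ x y z : ℝ × ℝ,
      symmPoincare x (symmPoincare y (symmPoincare x z)) =
        symmPoincare (symmPoincare x y) z) :=
  ⟨symmPoincare_symmPoincare, symmPoincare_self, symmPoincare_conj⟩
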